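/- arXiv:1703.00406 — 2 statements merged into one kernel-verified Lean document; each statement's English description precedes it below -/
import Mathlib

section
/- Let G be a graph with maximum degree Δ and let each vertex of degree between √Δ+1 and Δ/4 independently and uniformly choose one of its incident edges from a fixed subset of at least d_G(v) − 1 ≥ √Δ of its incident edges. Then with positive probability, every vertex of G is incident with at most √Δ + ∛Δ + 1 chosen edges. -/
/-!
Positive probability only asks for one good choice, and one exists deterministically. Each
`v ∈ VM` has at least `√Δ` candidate neighbours, and each vertex is a candidate of at most `Δ`
vertices, so Hall's theorem (every vertex offered with capacity `⌈√Δ⌉`, and `Δ ≤ ⌈√Δ⌉²`) lets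
every `v ∈ VM` choose a neighbour such that no vertex is chosen more than `⌈√Δ⌉` times. A vertex
then lies on at most `⌈√Δ⌉ + 1 ≤ √Δ + ∛Δ + 1` chosen edges: those chosen by others, plus its own.
-/

open Finset Real

/-- Under the uniform independent choices (one edge `f v ∈ F v` for each `v ∈ VM`),
the probability of the event `P`: the number of good outcomes divided by the total
number of outcomes. -/
noncomputable def choiceProb {V : Type} [Fintype V] [DecidableEq V]
    (VM : Finset V) (F : V → Finset (Sym2 V))
    (P : ({x // x ∈ VM} → Sym2 V) → Prop) : ℝ :=
  (((↑(Fintype.piFinset fun v : {x // x ∈ VM} => F v.1) :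
      Set ({x // x ∈ VM} → Sym2 V)) ∩ {f | P f}).ncard : ℝ) /
    (Fintype.piFinset fun v : {x // x ∈ VM} => F v.1).card

theorem exists_choice_card_fiber_le {ι α : Type*} [Fintype ι] [DecidableEq α]
    (T : ι → Finset α) {r d c : ℕ} (hr : 0 < r) (hT : ∀ i, r ≤ #(T i))
    (hd : ∀ x, #{i | x ∈ T i} ≤ d) (hdc : d ≤ r * c) :
    ∃ g : ι → α, (∀ i, g i ∈ T i) ∧ ∀ x, #{i | g i = x} ≤ c := by
  classical
  -- Hall's theorem for the targets `T i ×ˢ Fin c`, i.e. every target duplicated `c` times;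
  -- Hall's condition follows by double counting the incidences between `s` and `⋃ i ∈ s, T i`.
  have hall : ∀ s : Finset ι, #s ≤ #(s.biUnion fun i => T i ×ˢ (univ : Finset (Fin c))) := by
    intro s
    have hcount : #s * r ≤ #(s.biUnion T) * d := by
      refine card_mul_le_card_mul (fun i x => x ∈ T i) (fun i hi => ?_) (fun x _ => ?_)
      · rw [bipartiteAbove, filter_mem_eq_inter, inter_eq_right.mpr (subset_biUnion_of_mem T hi)]
        exact hT i
      · exact (card_le_card (monotone_filter_left _ (subset_univ s))).trans (hd x)
    have hprod : (s.biUnion fun i => T i ×ˢ (univ : Finset (Fin c))) = s.biUnion T ×ˢ univ := by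
      ext; simp
    rw [hprod, card_product, card_univ, Fintype.card_fin]
    refine Nat.le_of_mul_le_mul_right ?_ hr
    calc #s * r ≤ #(s.biUnion T) * d := hcount
      _ ≤ #(s.biUnion T) * c * r := by rw [mul_assoc, mul_comm c]; gcongr
  obtain ⟨g, hg_inj, hg_mem⟩ := (all_card_le_biUnion_card_iff_exists_injective _).mp hall
  refine ⟨fun i => (g i).1, fun i => (mem_product.mp (hg_mem i)).1, fun x => ?_⟩
  calc #{i | (g i).1 = x} ≤ #(univ : Finset (Fin c)) := by
        refine card_le_card_of_injOn (fun i => (g i).2) (fun _ _ => mem_coe.mpr (mem_univ _)) ?_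
        intro a ha b hb hab
        simp only [coe_filter, mem_univ, true_and] at ha hb
        exact hg_inj (Prod.ext (ha.trans hb.symm) hab)
    _ = c := by simp

theorem ncard_mk_incident_le {ι V : Type*} [Fintype ι] [DecidableEq V] {p : ι → V}
    (hp : Function.Injective p) (g : ι → V) (w : V) :
    {e : Sym2 V | (∃ i, s(p i, g i) = e) ∧ w ∈ e}.ncard ≤ #{i | g i = w} + 1 := by
  classical
  set S : Finset ι := ({i | g i = w} : Finset ι) ∪ ({i | p i = w} : Finset ι)
  have hsub : {e : Sym2 V | (∃ i, s(p i, g i) = e) ∧ w ∈ e} ⊆ S.image fun i => s(p i, g i) := by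
    rintro e ⟨⟨i, rfl⟩, hw⟩
    refine mem_image.mpr ⟨i, ?_, rfl⟩
    rcases Sym2.mem_iff.mp hw with h | h <;> simp [S, h]
  have hp_fiber : #{i | p i = w} ≤ 1 :=
    card_le_one.mpr fun a ha b hb => hp ((mem_filter.mp ha).2.trans (mem_filter.mp hb).2.symm)
  calc _ ≤ #(S.image fun i => s(p i, g i)) := by
        rw [← Set.ncard_coe_finset]; exact Set.ncard_le_ncard hsub
    _ ≤ #S := card_image_le
    _ ≤ #{i | g i = w} + 1 := (card_union_le _ _).trans (by gcongr)

theorem le_ceil_sqrt_mul_ceil_sqrt (n : ℕ) : n ≤ ⌈√(n : ℝ)⌉₊ * ⌈√(n : ℝ)⌉₊ := by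
  have h := Nat.le_ceil √(n : ℝ)
  exact_mod_cast (Real.mul_self_sqrt n.cast_nonneg).symm.le.trans
    (mul_le_mul h h (sqrt_nonneg _) (by positivity))

theorem ceil_sqrt_add_one_le {x : ℝ} (hx : 1 ≤ x) :
    (⌈√x⌉₊ : ℝ) + 1 ≤ √x + x ^ ((1 : ℝ) / 3) + 1 := by
  have h_ceil : (⌈√x⌉₊ : ℝ) < √x + 1 := Nat.ceil_lt_add_one (sqrt_nonneg x)
  have h_root : 1 ≤ x ^ ((1 : ℝ) / 3) := one_le_rpow hx (by norm_num)
  linarith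

namespace SimpleGraph

variable {V : Type*} [Fintype V] [DecidableEq V] (G : SimpleGraph V) [DecidableRel G.Adj]

theorem card_le_card_filter_neighborFinset {v : V} {F : Finset (Sym2 V)}
    (hF : F ⊆ G.incidenceFinset v) : #F ≤ #{w ∈ G.neighborFinset v | s(v, w) ∈ F} := by
  have hF_image : F ⊆ {w ∈ G.neighborFinset v | s(v, w) ∈ F}.image (s(v, ·)) := by
    intro e he
    obtain ⟨he_edge, hv⟩ := (G.mem_incidenceFinset v e).mp (hF he)
    rw [← Sym2.other_spec hv] at he he_edge ⊢
    exact mem_image_of_mem _ (mem_filter.mpr ⟨(G.mem_neighborFinset _ _).mpr he_edge, he⟩)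
  exact (card_le_card hF_image).trans card_image_le

theorem card_filter_mem_le_degree {ι : Type*} [Fintype ι] {p : ι → V}
    (hp : Function.Injective p) {T : ι → Finset V} (hT : ∀ i, T i ⊆ G.neighborFinset (p i))
    (w : V) : #{i | w ∈ T i} ≤ G.degree w := by
  rw [← card_neighborFinset_eq_degree]
  refine card_le_card_of_injOn p (fun i hi => ?_) hp.injOn
  simpa [adj_comm] using hT i (mem_filter.mp hi).2

end SimpleGraph

theorem choiceProb_pos_of_mem {V : Type} [Fintype V] [DecidableEq V] {VM : Finset V}
    {F : V → Finset (Sym2 V)} {P : ({x // x ∈ VM} → Sym2 V) → Prop}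
    (f : {x // x ∈ VM} → Sym2 V) (hf : ∀ v, f v ∈ F v.1) (hP : P f) :
    0 < choiceProb VM F P := by
  have hf' : f ∈ Fintype.piFinset fun v : {x // x ∈ VM} => F v.1 := Fintype.mem_piFinset.mpr hf
  refine div_pos ?_ (Nat.cast_pos.mpr (card_pos.mpr ⟨f, hf'⟩))
  rw [Nat.cast_pos, Set.ncard_pos ((finite_toSet _).inter_of_left _)]
  exact ⟨f, hf', hP⟩

theorem stmt_17 :
    ∃ Δ₀ : ℕ, ∀ (V : Type) [Fintype V] [DecidableEq V] (G : SimpleGraph V)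
      [DecidableRel G.Adj] (VM : Finset V) (F : V → Finset (Sym2 V)),
      Δ₀ ≤ G.maxDegree →
      (∀ v : V, v ∈ VM ↔ (Real.sqrt G.maxDegree + 1 ≤ (G.degree v : ℝ) ∧
        (G.degree v : ℝ) ≤ (G.maxDegree : ℝ) / 4)) →
      (∀ v ∈ VM, F v ⊆ G.incidenceFinset v) →
      (∀ v ∈ VM, ((G.degree v : ℤ) - 1 ≤ ((F v).card : ℤ) ∧
        Real.sqrt G.maxDegree ≤ ((F v).card : ℝ))) →
      0 < choiceProb VM F (fun f =>
        ∀ w : V, ({e : Sym2 V | (∃ v : {x // x ∈ VM}, f v = e) ∧ w ∈ e}.ncard : ℝ) ≤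
          Real.sqrt G.maxDegree + (G.maxDegree : ℝ) ^ ((1 : ℝ) / 3) + 1) := by
  refine ⟨1, fun V _ _ G _ VM F hΔ _ hF_inc hF_card => ?_⟩
  have hΔ' : (1 : ℝ) ≤ G.maxDegree := by exact_mod_cast hΔ
  set c := ⌈√(G.maxDegree : ℝ)⌉₊
  let T : {x // x ∈ VM} → Finset V := fun v => {w ∈ G.neighborFinset v | s(v.1, w) ∈ F v}
  have hc : 0 < c := Nat.ceil_pos.mpr (sqrt_pos.mpr (by linarith))
  have hT_card (v : {x // x ∈ VM}) : c ≤ #(T v) := Nat.ceil_le.mpr <| (hF_card v v.2).2.trans <|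
    by exact_mod_cast G.card_le_card_filter_neighborFinset (hF_inc v v.2)
  have hT_load (w : V) : #{v | w ∈ T v} ≤ G.maxDegree :=
    (G.card_filter_mem_le_degree Subtype.val_injective (fun _ => filter_subset _ _) w).trans
      (G.degree_le_maxDegree w)
  obtain ⟨g, hgT, hg_load⟩ :=
    exists_choice_card_fiber_le T hc hT_card hT_load (le_ceil_sqrt_mul_ceil_sqrt _)
  refine choiceProb_pos_of_mem (fun v => s(v.1, g v)) (fun v => (mem_filter.mp (hgT v)).2)
    fun w => ?_
  calc _ ≤ ((#{v | g v = w} + 1 : ℕ) : ℝ) := by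
        exact_mod_cast ncard_mk_incident_le Subtype.val_injective g w
    _ ≤ c + 1 := by exact_mod_cast Nat.add_le_add_right (hg_load w) 1
    _ ≤ _ := ceil_sqrt_add_one_le hΔ'
end

section
/- Let G be a graph with maximum degree Δ and let V_L = {v : d_G(v) ≥ Δ/32}. Pick each edge incident with some vertex of V_L independently with probability 6/√Δ, and let H be the graph induced by picked edges. Then with positive probability: d_H(v) ≤ 6√Δ + ∛Δ for every vertex v, and d_H(v) ≥ 3√Δ/16 − ∛Δ for every v ∈ V_L. -/
/-!
The fractional choice that gives every eligible edge weight `p = 6/√Δ` has degree exactly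
`p · d_L(v)` at each vertex, where `d_L(v)` counts the eligible edges at `v`. Iterative
(Beck–Fiala) rounding turns it into a 0/1 choice: while some coordinates are fractional, move
along a nonzero direction supported on them whose sum vanishes at every vertex meeting more than
two of them (it exists by a dimension count, because each edge meets at most two vertices), until
one more coordinate reaches 0 or 1. A vertex meeting at most two fractional edges can afterwards
drift by at most 1 per edge, so every degree ends within `2 ≤ ∛Δ` of `p · d_L(v)`; both bounds
follow as `d_L(v) ≤ Δ`, with `d_L(v) = d_G(v)` on `V_L`. Since the product measure charges every
single configuration, such a picking has positive probability.
-/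

open Finset Real MeasureTheory

/-- The set of edges of `G` incident with a vertex of degree at least `Δ/32`
(the vertices of `V_L`). -/
noncomputable def largeEdges {V : Type} [Fintype V] [DecidableEq V] (G : SimpleGraph V)
    [DecidableRel G.Adj] : Finset (Sym2 V) :=
  G.edgeFinset.filter
    (fun e => ∃ v : V, v ∈ e ∧ (G.maxDegree : ℝ) / 32 ≤ (G.degree v : ℝ))

/-- The product measure in which each edge incident with `V_L` is picked
independently with probability `6/√Δ`. -/
noncomputable def pickMeasure {V : Type} [Fintype V] [DecidableEq V]
    (G : SimpleGraph V) [DecidableRel G.Adj]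
    (hp : ENNReal.ofReal (6 / Real.sqrt G.maxDegree) ≤ 1) :
    Measure ({e // e ∈ largeEdges G} → Bool) :=
  Measure.pi fun _ =>
    (PMF.bernoulli (ENNReal.ofReal (6 / Real.sqrt G.maxDegree)).toNNReal
      ((ENNReal.toNNReal_mono ENNReal.one_ne_top hp).trans_eq ENNReal.toNNReal_one)).toMeasure

/-- The degree of `v` in the graph `H` induced by the picked edges. -/
noncomputable def pickedDeg {V : Type} [Fintype V] [DecidableEq V]
    (G : SimpleGraph V) [DecidableRel G.Adj]
    (f : {e // e ∈ largeEdges G} → Bool) (v : V) : ℕ :=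
  {w : V | ∃ h : s(v, w) ∈ largeEdges G, f ⟨s(v, w), h⟩ = true}.ncard

noncomputable def exitTime (a c : ℝ) : ℝ := if 0 < c then (1 - a) / c else -a / c

lemma exitTime_nonneg {a : ℝ} (ha : a ∈ Set.Icc 0 1) (c : ℝ) : 0 ≤ exitTime a c := by
  unfold exitTime
  split_ifs with hc
  · exact div_nonneg (by linarith [ha.2]) hc.le
  · exact div_nonneg_of_nonpos (by linarith [ha.1]) (not_lt.mp hc)

lemma add_mul_mem_Icc_of_le_exitTime {a c s : ℝ} (ha : a ∈ Set.Icc 0 1) (hs : 0 ≤ s)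
    (hsc : s ≤ exitTime a c) : a + s * c ∈ Set.Icc 0 1 := by
  obtain ⟨ha0, ha1⟩ := ha
  unfold exitTime at hsc
  split_ifs at hsc with hc
  · have : s * c ≤ 1 - a := (le_div_iff₀ hc).mp hsc
    constructor <;> nlinarith
  · rcases (not_lt.mp hc).lt_or_eq with hc | rfl
    · have : -a ≤ s * c := by rwa [le_div_iff_of_neg hc] at hsc
      constructor <;> nlinarith
    · simp [ha0, ha1]

lemma add_exitTime_mul {c : ℝ} (hc : c ≠ 0) (a : ℝ) :
    a + exitTime a c * c = 0 ∨ a + exitTime a c * c = 1 := by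
  unfold exitTime
  split_ifs
  · right; field_simp; ring
  · left; field_simp; ring

section Rounding

variable {ι W : Type*} [Fintype ι] (r : W → ι → Prop) [∀ v i, Decidable (r v i)]

noncomputable def floating (y : ι → ℝ) : Finset ι := {i | y i ≠ 0 ∧ y i ≠ 1}

lemma notMem_floating {y : ι → ℝ} {i : ι} : i ∉ floating y ↔ y i = 0 ∨ y i = 1 := by
  simp [floating, or_iff_not_imp_left]

lemma floating_add_smul_subset {y z : ι → ℝ} (hzy : ∀ i ∉ floating y, z i = 0) (s : ℝ) :
    floating (y + s • z) ⊆ floating y := fun i hi => by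
  by_contra hiy
  have hyi : (y + s • z) i = y i := by simp [hzy i hiy]
  exact notMem_floating.mpr (hyi ▸ notMem_floating.mp hiy) hi

lemma exists_ne_zero_sum_eq_zero_of_card_lt [DecidableEq ι] {A : Finset W} {F : Finset ι}
    (h : #A < #F) :
    ∃ z : ι → ℝ, z ≠ 0 ∧ (∀ i ∉ F, z i = 0) ∧ ∀ v ∈ A, ∑ i with r v i, z i = 0 := by
  let f : (ι → ℝ) →ₗ[ℝ] (A → ℝ) × ((Fᶜ : Finset ι) → ℝ) :=
    (LinearMap.pi fun v : A => ∑ i with r v i, LinearMap.proj i).prod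
      (LinearMap.pi fun i : (Fᶜ : Finset ι) => LinearMap.proj i.1)
  have hdim : Module.finrank ℝ ((A → ℝ) × ((Fᶜ : Finset ι) → ℝ)) <
      Module.finrank ℝ (ι → ℝ) := by
    simp only [Module.finrank_prod, Module.finrank_fintype_fun_eq_card, Fintype.card_coe,
      card_compl]
    have := F.card_le_univ
    omega
  obtain ⟨z, hz, hz0⟩ :=
    (Submodule.ne_bot_iff _).mp (LinearMap.ker_ne_bot_of_finrank_lt (f := f) hdim)
  have hz' := LinearMap.mem_ker.mp hz
  refine ⟨z, hz0, fun i hi => ?_, fun v hv => ?_⟩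
  · simpa [f] using congrFun (congrArg Prod.snd hz') ⟨i, mem_compl.mpr hi⟩
  · simpa [f] using congrFun (congrArg Prod.fst hz') ⟨v, hv⟩

omit [Fintype ι] in
lemma card_heavy_lt [Fintype W] {t : ℕ} (hr : ∀ i, #{v | r v i} ≤ t) {F : Finset ι}
    (hF : F.Nonempty) : #{v | t < #{i ∈ F | r v i}} < #F := by
  have := card_mul_le_card_mul (s := {v | t < #{i ∈ F | r v i}}) (t := F) r (m := t + 1) (n := t)
    (fun v hv => (mem_filter.mp hv).2)
    (fun i _ => (card_le_card (filter_subset_filter _ (subset_univ _))).trans (hr i))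
  have hF' := hF.card_pos
  nlinarith

lemma exists_add_smul_floating_lt [DecidableEq ι] {y z : ι → ℝ} (hy : ∀ i, y i ∈ Set.Icc 0 1)
    (hz : z ≠ 0) (hzy : ∀ i ∉ floating y, z i = 0) :
    ∃ s : ℝ, (∀ i, (y + s • z) i ∈ Set.Icc 0 1) ∧ #(floating (y + s • z)) < #(floating y) := by
  have hS : ({i | z i ≠ 0} : Finset ι).Nonempty := by
    obtain ⟨i, hi⟩ := Function.ne_iff.mp hz
    exact ⟨i, by simpa using hi⟩
  obtain ⟨i₀, hi₀, hs⟩ := exists_mem_eq_inf' hS fun i => exitTime (y i) (z i)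
  set s := ({i | z i ≠ 0} : Finset ι).inf' hS fun i => exitTime (y i) (z i)
  have hzi₀ : z i₀ ≠ 0 := (mem_filter.mp hi₀).2
  have hmem : ∀ i, (y + s • z) i ∈ Set.Icc 0 1 := by
    intro i
    by_cases hzi : z i = 0
    · simpa [hzi] using hy i
    · exact add_mul_mem_Icc_of_le_exitTime (hy i)
        ((le_inf'_iff hS _).mpr fun j _ => exitTime_nonneg (hy j) _)
        (inf'_le _ (by simpa using hzi))
  refine ⟨s, hmem, card_lt_card <| (ssubset_iff_of_subset (floating_add_smul_subset hzy s)).mpr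
    ⟨i₀, by_contra fun h => hzi₀ (hzy i₀ h), ?_⟩⟩
  rw [notMem_floating, Pi.add_apply, Pi.smul_apply, smul_eq_mul, hs]
  exact add_exitTime_mul hzi₀ _

lemma abs_sum_sub_le_card_floating [DecidableEq ι] {χ y : ι → ℝ}
    (hχ : ∀ i, χ i = 0 ∨ χ i = 1) (hy : ∀ i, y i ∈ Set.Icc 0 1)
    (hχy : ∀ i ∉ floating y, χ i = y i) (s : Finset ι) :
    |∑ i ∈ s, (χ i - y i)| ≤ #{i ∈ s | i ∈ floating y} := by
  rw [← sum_filter_of_ne (p := (· ∈ floating y)) fun i _ h =>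
    by_contra fun hi => h (by rw [hχy i hi, sub_self])]
  refine (abs_sum_le_sum_abs _ _).trans ?_
  rw [← nsmul_one, ← sum_const]
  refine sum_le_sum fun i _ => abs_le.mpr ?_
  rcases hχ i with h | h <;> constructor <;> linarith [(hy i).1, (hy i).2]

theorem exists_rounding_abs_sum_sub_le [DecidableEq ι] [Fintype W] {t : ℕ}
    (hr : ∀ i, #{v | r v i} ≤ t) (y : ι → ℝ) (hy : ∀ i, y i ∈ Set.Icc 0 1) :
    ∃ χ : ι → ℝ, (∀ i, χ i = 0 ∨ χ i = 1) ∧ (∀ i ∉ floating y, χ i = y i) ∧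
      ∀ v, |∑ i with r v i, (χ i - y i)| ≤ t := by
  induction hn : #(floating y) using Nat.strong_induction_on generalizing y with
  | _ n ih =>
  obtain hF | hF := (floating y).eq_empty_or_nonempty
  · exact ⟨y, fun i => notMem_floating.mp (by simp [hF]), fun _ _ => rfl, fun v => by simp⟩
  set A : Finset W := {v | t < #{i ∈ floating y | r v i}}
  obtain ⟨z, hz, hzy, hzA⟩ := exists_ne_zero_sum_eq_zero_of_card_lt r (card_heavy_lt r hr hF)
  obtain ⟨s, hy', hlt⟩ := exists_add_smul_floating_lt hy hz hzy
  obtain ⟨χ, hχ, hχy', hdisc⟩ := ih _ (hn ▸ hlt) (y + s • z) hy' rfl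
  have hχy : ∀ i ∉ floating y, χ i = y i := fun i hi => by
    rw [hχy' i fun h => hi (floating_add_smul_subset hzy s h)]
    simp [hzy i hi]
  refine ⟨χ, hχ, hχy, fun v => ?_⟩
  by_cases hv : v ∈ A
  · have : ∑ i with r v i, (χ i - y i) = ∑ i with r v i, (χ i - (y + s • z) i) := by
      simp only [Pi.add_apply, Pi.smul_apply, smul_eq_mul, sub_add_eq_sub_sub, sum_sub_distrib,
        ← mul_sum, hzA v hv, mul_zero, sub_zero]
    exact this ▸ hdisc v
  · refine (abs_sum_sub_le_card_floating hχ hy hχy _).trans ?_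
    have : #{i ∈ floating y | r v i} ≤ t := by simpa [A] using hv
    exact_mod_cast (card_le_card fun i => by simp +contextual).trans this

end Rounding

open scoped NNReal

lemma pi_toMeasure_pos {ι α : Type*} [Fintype ι] [MeasurableSpace α]
    [MeasurableSingletonClass α] {P : ι → PMF α} (hP : ∀ i a, P i a ≠ 0)
    {s : Set (ι → α)} (hs : s.Nonempty) : 0 < Measure.pi (fun i => (P i).toMeasure) s := by
  obtain ⟨f, hf⟩ := hs
  refine (pos_iff_ne_zero.mpr ?_).trans_le (measure_mono (Set.singleton_subset_iff.mpr hf))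
  simp [Measure.pi_singleton, Finset.prod_ne_zero_iff,
    PMF.toMeasure_apply_singleton _ _ (measurableSet_singleton _), hP]

lemma bernoulli_ne_zero {p : ℝ≥0} (hp : p ≤ 1) (hp0 : 0 < p) (hp1 : p < 1) (b : Bool) :
    PMF.bernoulli p hp b ≠ 0 := by
  cases b <;> simp [PMF.bernoulli_apply, hp0.ne', tsub_eq_zero_iff_le, hp1]

lemma card_filter_mem_le_two {α : Type*} [Fintype α] [DecidableEq α] (e : Sym2 α) :
    #{v | v ∈ e} ≤ 2 := by
  rw [show ({v | v ∈ e} : Finset α) = e.toFinset by ext; simp [Sym2.mem_toFinset],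
    Sym2.card_toFinset]
  split_ifs <;> omega

lemma two_le_rpow_one_third {x : ℝ} (hx : 8 ≤ x) : 2 ≤ x ^ ((1 : ℝ) / 3) := by
  calc (2 : ℝ) = (2 ^ (3 : ℝ)) ^ ((1 : ℝ) / 3) := by rw [← rpow_mul (by norm_num)]; norm_num
    _ ≤ x ^ ((1 : ℝ) / 3) := rpow_le_rpow (by positivity) (by norm_num; linarith) (by norm_num)

section Picking

variable {V : Type} [Fintype V] [DecidableEq V] (G : SimpleGraph V) [DecidableRel G.Adj]

noncomputable def largeDegree (v : V) : ℕ := #{i : {e // e ∈ largeEdges G} | v ∈ i.1}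

lemma largeDegree_eq_card_filter (v : V) : largeDegree G v = #{e ∈ largeEdges G | v ∈ e} := by
  refine card_bij (fun i _ => i.1) (fun i hi => ?_) (fun _ _ _ _ => Subtype.ext) fun e he => ?_
  · simpa [i.2] using hi
  · obtain ⟨he, hve⟩ := mem_filter.mp he
    exact ⟨⟨e, he⟩, by simpa using hve, rfl⟩

lemma pickedDeg_eq_card (f : {e // e ∈ largeEdges G} → Bool) (v : V) :
    pickedDeg G f v = #{i : {e // e ∈ largeEdges G} | v ∈ i.1 ∧ f i} := by
  rw [pickedDeg, ← Set.ncard_coe_finset]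
  refine Set.ncard_congr (fun w hw => ⟨s(v, w), hw.1⟩) (fun w ⟨_, hw⟩ => by simp [hw])
    (fun w₁ w₂ _ _ h => Sym2.congr_right.mp (congrArg Subtype.val h)) ?_
  intro i hi
  simp only [coe_filter, mem_univ, true_and, Set.mem_ofPred_eq] at hi
  obtain ⟨w, hw⟩ := Sym2.mem_iff_exists.mp hi.1
  exact ⟨w, ⟨hw ▸ i.2, by simpa [← hw] using hi.2⟩, Subtype.ext hw.symm⟩

lemma largeDegree_le_degree (v : V) : largeDegree G v ≤ G.degree v := by
  rw [largeDegree_eq_card_filter, ← G.card_incidenceFinset_eq_degree, G.incidenceFinset_eq_filter]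
  exact card_le_card (filter_subset_filter _ (filter_subset _ _))

lemma largeDegree_eq_degree {v : V} (hv : (G.maxDegree : ℝ) / 32 ≤ G.degree v) :
    largeDegree G v = G.degree v := by
  rw [largeDegree_eq_card_filter, ← G.card_incidenceFinset_eq_degree, G.incidenceFinset_eq_filter]
  congr 1
  ext e
  simp only [largeEdges, mem_filter]
  exact ⟨fun ⟨⟨he, _⟩, hve⟩ => ⟨he, hve⟩, fun ⟨he, hve⟩ => ⟨⟨he, v, hve, hv⟩, hve⟩⟩

lemma exists_abs_pickedDeg_sub_le {p : ℝ} (hp : p ∈ Set.Icc 0 1) :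
    ∃ f, ∀ v, |(pickedDeg G f v : ℝ) - largeDegree G v * p| ≤ 2 := by
  obtain ⟨χ, hχ, -, hdisc⟩ := exists_rounding_abs_sum_sub_le
    (fun v (i : {e // e ∈ largeEdges G}) => v ∈ i.1) (fun i => card_filter_mem_le_two i.1)
    (fun _ => p) fun _ => hp
  refine ⟨fun i => decide (χ i = 1), fun v => ?_⟩
  have hχ' : ∀ i, χ i = if decide (χ i = 1) then 1 else 0 := fun i => by
    rcases hχ i with h | h <;> simp [h]
  convert hdisc v using 2
  · rw [sum_sub_distrib, sum_const, nsmul_eq_mul, pickedDeg_eq_card, largeDegree,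
      sum_congr rfl fun i _ => hχ' i, sum_boole, filter_filter]
  · norm_num

end Picking

theorem stmt_18 :
    ∃ Δ₀ : ℕ, ∀ (V : Type) [Fintype V] [DecidableEq V] (G : SimpleGraph V)
      [DecidableRel G.Adj],
      Δ₀ ≤ G.maxDegree →
      ∀ hp : ENNReal.ofReal (6 / Real.sqrt G.maxDegree) ≤ 1,
      0 < pickMeasure G hp {f |
        (∀ v : V, (pickedDeg G f v : ℝ) ≤
          6 * Real.sqrt G.maxDegree + (G.maxDegree : ℝ) ^ ((1 : ℝ) / 3)) ∧
        (∀ v : V, (G.maxDegree : ℝ) / 32 ≤ (G.degree v : ℝ) →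
          3 * Real.sqrt G.maxDegree / 16 - (G.maxDegree : ℝ) ^ ((1 : ℝ) / 3) ≤
            (pickedDeg G f v : ℝ))} := by
  refine ⟨64, fun V _ _ G _ hΔ hp => ?_⟩
  have hΔ' : (64 : ℝ) ≤ G.maxDegree := by exact_mod_cast hΔ
  have hsqrt : 8 ≤ √(G.maxDegree : ℝ) := le_sqrt_of_sq_le (by linarith)
  set p := 6 / √(G.maxDegree : ℝ)
  have hp0 : 0 < p := by positivity
  have hp1 : p < 1 := (div_lt_one (by linarith)).mpr (by linarith)
  have hΔp : (G.maxDegree : ℝ) * p = 6 * √(G.maxDegree : ℝ) := by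
    rw [mul_div_left_comm, div_sqrt]
  have hcbrt := two_le_rpow_one_third (by linarith : (8 : ℝ) ≤ G.maxDegree)
  obtain ⟨f, hf⟩ := exists_abs_pickedDeg_sub_le G ⟨hp0.le, hp1.le⟩
  refine pi_toMeasure_pos (fun _ => bernoulli_ne_zero _ ?_ ?_) ⟨f, fun v => ?_, fun v hv => ?_⟩
  · rw [← ENNReal.ofNNReal_toNNReal, ENNReal.toNNReal_coe]; exact toNNReal_pos.mpr hp0
  · rw [← ENNReal.ofNNReal_toNNReal, ENNReal.toNNReal_coe]; exact toNNReal_lt_one.mpr hp1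
  · have hle : largeDegree G v * p ≤ G.maxDegree * p := mul_le_mul_of_nonneg_right
      (by exact_mod_cast (largeDegree_le_degree G v).trans (G.degree_le_maxDegree v)) hp0.le
    linarith [(abs_le.mp (hf v)).2]
  · have hle : G.maxDegree / 32 * p ≤ largeDegree G v * p :=
      mul_le_mul_of_nonneg_right (largeDegree_eq_degree G hv ▸ hv) hp0.le
    have : (G.maxDegree : ℝ) / 32 * p = 3 * √(G.maxDegree : ℝ) / 16 := by
      rw [div_mul_eq_mul_div, hΔp]; ring
    linarith [(abs_le.mp (hf v)).1]
end
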